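/- Fix a ∈ (0, 1/2). For odd n ∈ ℕ set m = (n−1)/2. Then there exist C > 0 and N such that for all odd n ≥ N and all x ∈ [n^{−a}, π − n^{−a}], |Σ_{j=0}^{m} cos²((j + (n+1)/4)x) − n/4| ≤ C n^{a}. -/

import Mathlib

open Real Set Finset

/-!
Since `cos² y = (1 + cos 2y) / 2`, the sum equals `(n + 1) / 4` plus half a sum of cosines in
arithmetic progression with step `2x`. Multiplied by `2 sin x` that sum telescopes, so it is at
most `1 / |sin x|`, and Jordan's inequality gives `sin x ≥ 2 n^(-ν) / π` on `[n^(-ν), π - n^(-ν)]`.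
-/

lemma two_mul_sin_mul_sum_range_cos (θ x : ℝ) (M : ℕ) :
    2 * sin x * ∑ j ∈ range M, cos (θ + 2 * j * x) =
      sin (θ + (2 * M - 1) * x) - sin (θ - x) := by
  rw [mul_sum]
  convert sum_range_sub (fun j : ℕ => sin (θ + (2 * j - 1) * x)) M using 1
  · refine sum_congr rfl fun j _ => ?_
    rw [sin_sub_sin]
    push_cast
    ring_nf
  · simp only [Nat.cast_zero, mul_zero, zero_sub, neg_one_mul, ← sub_eq_add_neg]

lemma abs_sum_range_cos_le (θ x : ℝ) (M : ℕ) (hx : sin x ≠ 0) :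
    |∑ j ∈ range M, cos (θ + 2 * j * x)| ≤ 1 / |sin x| := by
  have hsin : 0 < |sin x| := abs_pos.mpr hx
  have key : |2 * sin x * ∑ j ∈ range M, cos (θ + 2 * j * x)| ≤ 2 := by
    rw [two_mul_sin_mul_sum_range_cos]
    refine (abs_sub _ _).trans ?_
    linarith [abs_sin_le_one (θ + (2 * M - 1) * x), abs_sin_le_one (θ - x)]
  rw [abs_mul, abs_mul, abs_two] at key
  rw [le_div_iff₀ hsin]
  linarith

lemma mul_le_sin_of_mem_Icc {ε x : ℝ} (hε : 0 ≤ ε) (hx : x ∈ Icc ε (π - ε)) :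
    2 / π * ε ≤ sin x := by
  obtain ⟨hεx, hxε⟩ := hx
  have hπ : 0 ≤ 2 / π := by positivity
  rcases le_or_gt x (π / 2) with hx2 | hx2
  · exact (mul_le_mul_of_nonneg_left hεx hπ).trans (mul_le_sin (hε.trans hεx) hx2)
  · rw [← sin_pi_sub]
    exact (mul_le_mul_of_nonneg_left (by linarith) hπ).trans (mul_le_sin (by linarith) (by linarith))

lemma sum_range_cos_sq (θ x : ℝ) (M : ℕ) :
    ∑ j ∈ range M, cos ((j + θ) * x) ^ 2 =
      M / 2 + (∑ j ∈ range M, cos (2 * θ * x + 2 * j * x)) / 2 := by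
  simp only [cos_sq, sum_add_distrib, sum_const, card_range, nsmul_eq_mul, sum_div]
  congr 1
  · ring
  · refine sum_congr rfl fun j _ => ?_
    ring_nf

/-- For odd `n` and `m = (n-1)/2`, uniformly for `x ∈ [n^(-a), π - n^(-a)]`,
`Σ_{j=0}^{m} cos²((j + (n+1)/4)x) = n/4 + O(n^a)`. -/
theorem estimate_A_two_blocks_odd
    (ν : ℝ) (hν : ν ∈ Set.Ioo (0 : ℝ) (1 / 2)) :
    ∃ C > 0, ∃ N : ℕ, ∀ n ≥ N, Odd n →
      ∀ x ∈ Set.Icc ((n : ℝ) ^ (-ν)) (π - (n : ℝ) ^ (-ν)),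
        |(∑ j ∈ Finset.range ((n - 1) / 2 + 1),
            Real.cos (((j : ℝ) + ((n : ℝ) + 1) / 4) * x) ^ 2) - (n : ℝ) / 4|
          ≤ C * (n : ℝ) ^ ν := by
  refine ⟨(1 + π) / 4, by positivity, 0, fun n _ hodd x hx => ?_⟩
  have hn : (1 : ℝ) ≤ n := by exact_mod_cast hodd.pos
  have hcard : (((n - 1) / 2 + 1 : ℕ) : ℝ) = (n + 1) / 2 := by
    obtain ⟨k, rfl⟩ := hodd
    rw [show (2 * k + 1 - 1) / 2 + 1 = k + 1 by omega]
    push_cast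
    ring
  have hsin : 2 / (π * n ^ ν) ≤ sin x := by
    have := mul_le_sin_of_mem_Icc (by positivity) hx
    rwa [rpow_neg (by positivity), ← div_eq_mul_inv, div_div] at this
  have hsin_pos : 0 < sin x := hsin.trans_lt' (by positivity)
  set S := ∑ j ∈ range ((n - 1) / 2 + 1), cos (2 * ((n + 1) / 4) * x + 2 * j * x)
  have hS : |S| ≤ π * n ^ ν / 2 :=
    calc |S| ≤ 1 / |sin x| := abs_sum_range_cos_le _ _ _ hsin_pos.ne'
      _ ≤ 1 / (2 / (π * n ^ ν)) := by rw [abs_of_pos hsin_pos]; gcongr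
      _ = π * n ^ ν / 2 := one_div_div _ _
  have hpow : 1 ≤ (n : ℝ) ^ ν := one_le_rpow hn hν.1.le
  rw [sum_range_cos_sq, hcard, show (n + 1 : ℝ) / 2 / 2 + S / 2 - n / 4 = 1 / 4 + S / 2 by ring]
  calc |1 / 4 + S / 2| ≤ |1 / 4| + |S / 2| := abs_add_le _ _
    _ = 1 / 4 + |S| / 2 := by rw [abs_of_pos (by norm_num : (0 : ℝ) < 1 / 4), abs_div, abs_two]
    _ ≤ (1 + π) / 4 * n ^ ν := by nlinarith
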